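/- arXiv:2202.12876 — 4 statements merged into one kernel-verified Lean document; each statement's English description precedes it below -/
import Mathlib

section
/- Monotonicity of the pinching inequalities (claim (1) in the proof of Remark 2.8): Let θ ∈ M_ℝ and let χ ∈ M_ℝ satisfy χ − θ ∈ ∇̄_ℓ. Let λ' ∈ ℓ^⊥ with |λ'| = 1 and let 0 < t ≤ s. If |⟨λ' + t λ_0, χ − θ⟩| > ⟨λ' + t λ_0, ζ_{λ'}⟩/2, then |⟨λ' + s λ_0, χ − θ⟩| > ⟨λ' + s λ_0, ζ_{λ'}⟩/2. -/
noncomputable section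

/-- The canonical pairing between `N_ℝ = Fin d → ℝ` and `M_ℝ = Fin d → ℝ`. -/
def pairR {d : ℕ} (lam chi : Fin d → ℝ) : ℝ := ∑ i, lam i * chi i

/-- The lattice `M ⊆ M_ℝ`, i.e. the image of `Fin d → ℤ` in `Fin d → ℝ`. -/
def latticePts (d : ℕ) : Set (Fin d → ℝ) :=
  Set.range (fun χ : Fin d → ℤ => fun i => ((χ i : ℝ)))

/-- `ζ_λ := −∑_{i : ⟨λ, β_i⟩ ≤ 0} β_i + ∑_{j : ⟨λ, α_j⟩ < 0} α_j`. -/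
def zetaW {d n m : ℕ} (β : Fin n → Fin d → ℝ) (α : Fin m → Fin d → ℝ)
    (lam : Fin d → ℝ) : Fin d → ℝ :=
  -(∑ i ∈ Finset.univ.filter (fun i => pairR lam (β i) ≤ 0), β i) +
    ∑ j ∈ Finset.univ.filter (fun j => pairR lam (α j) < 0), α j

/-- `η_λ := ⟨λ, ζ_λ⟩`. -/
def etaW {d n m : ℕ} (β : Fin n → Fin d → ℝ) (α : Fin m → Fin d → ℝ)
    (lam : Fin d → ℝ) : ℝ := pairR lam (zetaW β α lam)

/-- The cylinder window `∇̄_ℓ`. -/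
def cylinderW {d n m : ℕ} (β : Fin n → Fin d → ℝ) (α : Fin m → Fin d → ℝ)
    (lam0 ℓ : Fin d → ℝ) : Set (Fin d → ℝ) :=
  {χ | |pairR lam0 χ| ≤ etaW β α lam0 / 2 ∧
    ∀ lam' : Fin d → ℝ, pairR lam' ℓ = 0 → |pairR lam' χ| ≤ etaW β α lam' / 2}

/-- The barrel window `∇_ℓ`. -/
def barrelW {d n m : ℕ} (β : Fin n → Fin d → ℝ) (α : Fin m → Fin d → ℝ)
    (lam0 ℓ : Fin d → ℝ) : Set (Fin d → ℝ) :=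
  {χ | |pairR lam0 χ| ≤ etaW β α lam0 / 2 ∧
    ∀ lam' : Fin d → ℝ, pairR lam' ℓ = 0 →
      (|pairR lam' χ| < etaW β α lam' / 2 ∨
        (pairR lam' χ = etaW β α lam' / 2 ∧
          pairR lam0 χ ≤ pairR lam0 (zetaW β α lam') / 2) ∨
        (pairR lam' χ = -(etaW β α lam' / 2) ∧
          -(pairR lam0 (zetaW β α lam') / 2) ≤ pairR lam0 χ))}

/-- `θ` is `λ_0`-generic with respect to `ℓ`: for every `λ' ∈ ℓ^⊥ ∪ {0}` there is no `χ ∈ M`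
with `⟨λ_0, χ − θ − ζ_{λ'}/2⟩ = 0`.  (Note `0 ∈ ℓ^⊥`.) -/
def genericW {d n m : ℕ} (β : Fin n → Fin d → ℝ) (α : Fin m → Fin d → ℝ)
    (lam0 ℓ θ : Fin d → ℝ) : Prop :=
  ∀ lam' : Fin d → ℝ, pairR lam' ℓ = 0 →
    ∀ χ ∈ latticePts d, pairR lam0 (χ - θ - (2⁻¹ : ℝ) • zetaW β α lam') ≠ 0

/-- A norm on `N_ℝ = Fin d → ℝ`. -/
structure IsNorm {d : ℕ} (nrm : (Fin d → ℝ) → ℝ) : Prop where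
  eq_zero_iff : ∀ x, nrm x = 0 ↔ x = 0
  smul_eq : ∀ (c : ℝ) (x : Fin d → ℝ), nrm (c • x) = |c| * nrm x
  add_le : ∀ x y, nrm (x + y) ≤ nrm x + nrm y

/-- The pinched cylinder `∇̄_{ℓ,t}`. -/
def pinchedW {d n m : ℕ} (β : Fin n → Fin d → ℝ) (α : Fin m → Fin d → ℝ)
    (lam0 ℓ : Fin d → ℝ) (nrm : (Fin d → ℝ) → ℝ) (t : ℝ) : Set (Fin d → ℝ) :=
  {χ | χ ∈ cylinderW β α lam0 ℓ ∧
    ∀ lam' : Fin d → ℝ, pairR lam' ℓ = 0 → nrm lam' = 1 →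
      |pairR (lam' + t • lam0) χ| ≤ pairR (lam' + t • lam0) (zetaW β α lam') / 2}

/-! Along the ray `u ↦ λ' + u λ₀` both sides of the pinching inequality are affine in `u`, so their
difference `|⟨λ' + u λ₀, χ - θ⟩| - ⟨λ' + u λ₀, ζ_{λ'}⟩ / 2` is convex. It is `≤ 0` at `u = 0` because
`χ - θ` lies in the cylinder, so once it is positive at `t > 0` it stays positive for all `s ≥ t`. -/

theorem pairR_add_smul_left {d : ℕ} (lam mu v : Fin d → ℝ) (u : ℝ) :
    pairR (lam + u • mu) v = pairR lam v + u * pairR mu v := by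
  simp only [pairR, Pi.add_apply, Pi.smul_apply, smul_eq_mul, add_mul, Finset.sum_add_distrib,
    Finset.mul_sum, mul_assoc]

theorem lt_abs_add_mul_of_lt_abs_add_mul {a b c e t s : ℝ} (h0 : |a| ≤ c) (ht : 0 < t)
    (hts : t ≤ s) (h : c + t * e < |a + t * b|) : c + s * e < |a + s * b| := by
  have hsplit : t * (a + s * b) = s * (a + t * b) - (s - t) * a := by ring
  have hs : 0 < s := ht.trans_le hts
  have key : t * (c + s * e) < t * |a + s * b| :=
    calc t * (c + s * e) = s * (c + t * e) - (s - t) * c := by ring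
      _ < s * |a + t * b| - (s - t) * |a| := by
        linarith [mul_lt_mul_of_pos_left h hs, mul_le_mul_of_nonneg_left h0 (sub_nonneg.mpr hts)]
      _ = |s * (a + t * b)| - |(s - t) * a| := by
        rw [abs_mul, abs_mul, abs_of_pos hs, abs_of_nonneg (sub_nonneg.mpr hts)]
      _ ≤ |t * (a + s * b)| := hsplit ▸ abs_sub_abs_le_abs_sub _ _
      _ = t * |a + s * b| := by rw [abs_mul, abs_of_pos ht]
  exact lt_of_mul_lt_mul_left key ht.le

theorem pinching_monotone_general {d n m : ℕ}
    (β : Fin n → Fin d → ℝ) (α : Fin m → Fin d → ℝ)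
    (lam0 : Fin d → ℝ)
    (ℓ : Fin d → ℝ)
    (θ χ : Fin d → ℝ) (hχ : χ - θ ∈ cylinderW β α lam0 ℓ)
    (lam' : Fin d → ℝ) (hlam' : pairR lam' ℓ = 0)
    (t s : ℝ) (ht : 0 < t) (hts : t ≤ s)
    (h : pairR (lam' + t • lam0) (zetaW β α lam') / 2 < |pairR (lam' + t • lam0) (χ - θ)|) :
    pairR (lam' + s • lam0) (zetaW β α lam') / 2 < |pairR (lam' + s • lam0) (χ - θ)| := by
  have halve (u : ℝ) : pairR (lam' + u • lam0) (zetaW β α lam') / 2 =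
      etaW β α lam' / 2 + u * (pairR lam0 (zetaW β α lam') / 2) := by
    rw [pairR_add_smul_left, etaW]; ring
  rw [halve, pairR_add_smul_left] at h ⊢
  exact lt_abs_add_mul_of_lt_abs_add_mul (hχ.2 lam' hlam') ht hts h

/-- claim (1) in the proof of Remark 2.8: monotonicity of the pinching
inequalities in t. -/
theorem pinching_monotone {d n m : ℕ} (hn : 1 ≤ n)
    (β : Fin n → Fin d → ℝ) (α : Fin m → Fin d → ℝ)
    (hβ : ∀ i, β i ∈ latticePts d) (hα : ∀ j, α j ∈ latticePts d)
    (lam0 : Fin d → ℝ)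
    (hlam0β : ∀ i, pairR lam0 (β i) < 0)
    (hlam0α : ∀ j, pairR lam0 (α j) = 0)
    (ℓ : Fin d → ℝ) (hℓ : pairR lam0 ℓ ≠ 0)
    (nrm : (Fin d → ℝ) → ℝ) (hnrm : IsNorm nrm) (hnrm0 : nrm lam0 = 1)
    (θ χ : Fin d → ℝ) (hχ : χ - θ ∈ cylinderW β α lam0 ℓ)
    (lam' : Fin d → ℝ) (hlam' : pairR lam' ℓ = 0) (hlam'norm : nrm lam' = 1)
    (t s : ℝ) (ht : 0 < t) (hts : t ≤ s)
    (h : pairR (lam' + t • lam0) (zetaW β α lam') / 2 < |pairR (lam' + t • lam0) (χ - θ)|) :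
    pairR (lam' + s • lam0) (zetaW β α lam') / 2 < |pairR (lam' + s • lam0) (χ - θ)| :=
  pinching_monotone_general β α lam0 ℓ θ χ hχ lam' hlam' t s ht hts h
end
end

section
/- Pinched cylinders lie in the barrel window: for every θ ∈ M_ℝ and every t > 0, one has the containment of lattice-point sets (θ + ∇̄_{ℓ,t}) ∩ M ⊆ (θ + ∇_ℓ) ∩ M. -/
noncomputable section

/-!
Fix `λ' ∈ ℓ^⊥`. For `λ' = 0` we have `η_0 = 0` and, because `λ_0` is negative on every weight and
vanishes on every root, `ζ_0 = ζ_{λ_0}`; the barrel clause is then the `λ_0`-strip condition.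
For `λ' ≠ 0`, `ζ` is invariant under positive rescaling of `λ'`, so the pinching inequality holds
for `λ' + t|λ'| λ_0`. On the boundary `⟨λ', χ⟩ = ±η_{λ'}/2` of the cylinder it reduces to
`± t|λ'| ⟨λ_0, χ⟩ ≤ t|λ'| ⟨λ_0, ζ_{λ'}⟩/2`, which is the barrel's tie-breaking condition.
-/

@[simp]
lemma pairR_zero_left {d : ℕ} (χ : Fin d → ℝ) : pairR (0 : Fin d → ℝ) χ = 0 := by
  simp [pairR]

@[simp]
lemma pairR_add_left {d : ℕ} (a b χ : Fin d → ℝ) :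
    pairR (a + b) χ = pairR a χ + pairR b χ := by
  simp [pairR, add_mul, Finset.sum_add_distrib]

@[simp]
lemma pairR_smul_left {d : ℕ} (c : ℝ) (a χ : Fin d → ℝ) :
    pairR (c • a) χ = c * pairR a χ := by
  simp [pairR, Finset.mul_sum, mul_assoc]

lemma IsNorm.pos_of_ne_zero {d : ℕ} {nrm : (Fin d → ℝ) → ℝ} (h : IsNorm nrm) {x : Fin d → ℝ}
    (hx : x ≠ 0) : 0 < nrm x := by
  have h0 : nrm 0 = 0 := (h.eq_zero_iff 0).mpr rfl
  have hneg : nrm (-x) = nrm x := by simpa using h.smul_eq (-1) x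
  have htri := h.add_le x (-x)
  rw [add_neg_cancel, h0, hneg] at htri
  exact lt_of_le_of_ne (by linarith) fun he => hx ((h.eq_zero_iff x).mp he.symm)

section Zeta

variable {d n m : ℕ} (β : Fin n → Fin d → ℝ) (α : Fin m → Fin d → ℝ)

lemma zetaW_smul_of_pos {c : ℝ} (hc : 0 < c) (lam : Fin d → ℝ) :
    zetaW β α (c • lam) = zetaW β α lam := by
  have hle (x : ℝ) : c * x ≤ 0 ↔ x ≤ 0 := by
    constructor <;> intro h <;> nlinarith
  have hlt (x : ℝ) : c * x < 0 ↔ x < 0 := by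
    constructor <;> intro h <;> nlinarith
  simp only [zetaW, pairR_smul_left, hle, hlt]

lemma zetaW_zero_eq {lam : Fin d → ℝ} (hβ : ∀ i, pairR lam (β i) ≤ 0)
    (hα : ∀ j, 0 ≤ pairR lam (α j)) : zetaW β α 0 = zetaW β α lam := by
  simp [zetaW, hβ, fun j => (hα j).not_gt]

@[simp]
lemma etaW_zero : etaW β α (0 : Fin d → ℝ) = 0 :=
  pairR_zero_left _

end Zeta

lemma pinchedW_rescaled {d n m : ℕ} {β : Fin n → Fin d → ℝ} {α : Fin m → Fin d → ℝ}
    {lam0 ℓ : Fin d → ℝ} {nrm : (Fin d → ℝ) → ℝ} (hnrm : IsNorm nrm) {t : ℝ} {χ : Fin d → ℝ}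
    (hχ : χ ∈ pinchedW β α lam0 ℓ nrm t) {lam' : Fin d → ℝ} (hl : pairR lam' ℓ = 0)
    (hz : lam' ≠ 0) :
    |pairR lam' χ + t * nrm lam' * pairR lam0 χ| ≤
      (pairR lam' (zetaW β α lam') + t * nrm lam' * pairR lam0 (zetaW β α lam')) / 2 := by
  set c := nrm lam'
  have hc : 0 < c := hnrm.pos_of_ne_zero hz
  have hunit : nrm (c⁻¹ • lam') = 1 := by
    rw [hnrm.smul_eq, abs_of_pos (inv_pos.mpr hc), inv_mul_cancel₀ hc.ne']
  have h := hχ.2 (c⁻¹ • lam') (by simp [hl]) hunit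
  rw [zetaW_smul_of_pos β α (inv_pos.mpr hc)] at h
  simp only [pairR_add_left, pairR_smul_left] at h
  calc |pairR lam' χ + t * c * pairR lam0 χ|
      = |c * (c⁻¹ * pairR lam' χ + t * pairR lam0 χ)| := by field_simp
    _ = c * |c⁻¹ * pairR lam' χ + t * pairR lam0 χ| := by rw [abs_mul, abs_of_pos hc]
    _ ≤ c * ((c⁻¹ * pairR lam' (zetaW β α lam') + t * pairR lam0 (zetaW β α lam')) / 2) :=
        mul_le_mul_of_nonneg_left h hc.le
    _ = (pairR lam' (zetaW β α lam') + t * c * pairR lam0 (zetaW β α lam')) / 2 := by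
        field_simp

lemma abs_lt_or_boundary_of_abs_add_le {a b z w s : ℝ} (hs : 0 < s) (ha : |a| ≤ z / 2)
    (h : |a + s * b| ≤ (z + s * w) / 2) :
    |a| < z / 2 ∨ (a = z / 2 ∧ b ≤ w / 2) ∨ (a = -(z / 2) ∧ -(w / 2) ≤ b) := by
  rcases ha.lt_or_eq with hlt | heq
  · exact Or.inl hlt
  obtain ⟨hL, hR⟩ := abs_le.mp h
  rcases (abs_eq ((abs_nonneg a).trans_eq heq)).mp heq with hp | hm
  · refine Or.inr (Or.inl ⟨hp, ?_⟩)
    subst hp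
    nlinarith
  · refine Or.inr (Or.inr ⟨hm, ?_⟩)
    rw [hm] at hL
    nlinarith

theorem pinched_subset_barrel_general {d n m : ℕ}
    (β : Fin n → Fin d → ℝ) (α : Fin m → Fin d → ℝ)
    (lam0 : Fin d → ℝ)
    (hlam0β : ∀ i, pairR lam0 (β i) < 0)
    (hlam0α : ∀ j, pairR lam0 (α j) = 0)
    (ℓ : Fin d → ℝ)
    (nrm : (Fin d → ℝ) → ℝ) (hnrm : IsNorm nrm)
    (θ : Fin d → ℝ) (t : ℝ) (ht : 0 < t) :
    {χ | χ ∈ latticePts d ∧ χ - θ ∈ pinchedW β α lam0 ℓ nrm t} ⊆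
      {χ | χ ∈ latticePts d ∧ χ - θ ∈ barrelW β α lam0 ℓ} := by
  rintro χ ⟨hM, hpin⟩
  obtain ⟨hstrip, hcyl⟩ := hpin.1
  refine ⟨hM, hstrip, fun lam' hl => ?_⟩
  rcases eq_or_ne lam' 0 with rfl | hz
  · have hζ : zetaW β α 0 = zetaW β α lam0 :=
      zetaW_zero_eq β α (fun i => (hlam0β i).le) (fun j => (hlam0α j).ge)
    exact Or.inr (Or.inl ⟨by simp, hζ ▸ (abs_le.mp hstrip).2⟩)
  · exact abs_lt_or_boundary_of_abs_add_le (mul_pos ht (hnrm.pos_of_ne_zero hz)) (hcyl lam' hl)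
      (pinchedW_rescaled hnrm hpin hl hz)

/-- for every θ and t > 0, the lattice points of θ + ∇̄_{ℓ,t} are contained
in those of θ + ∇_ℓ. -/
theorem pinched_subset_barrel {d n m : ℕ} (hn : 1 ≤ n)
    (β : Fin n → Fin d → ℝ) (α : Fin m → Fin d → ℝ)
    (hβ : ∀ i, β i ∈ latticePts d) (hα : ∀ j, α j ∈ latticePts d)
    (lam0 : Fin d → ℝ)
    (hlam0β : ∀ i, pairR lam0 (β i) < 0)
    (hlam0α : ∀ j, pairR lam0 (α j) = 0)
    (ℓ : Fin d → ℝ) (hℓ : pairR lam0 ℓ ≠ 0)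
    (nrm : (Fin d → ℝ) → ℝ) (hnrm : IsNorm nrm) (hnrm0 : nrm lam0 = 1)
    (θ : Fin d → ℝ) (t : ℝ) (ht : 0 < t) :
    {χ | χ ∈ latticePts d ∧ χ - θ ∈ pinchedW β α lam0 ℓ nrm t} ⊆
      {χ | χ ∈ latticePts d ∧ χ - θ ∈ barrelW β α lam0 ℓ} :=
  pinched_subset_barrel_general β α lam0 hlam0β hlam0α ℓ nrm hnrm θ t ht
end
end

section
/- Existence and a sufficient criterion for λ_0-generic characters: Assume in addition that λ_0 is rational, i.e. λ_0 ∈ N ⊗ ℚ where N := Hom(M, ℤ), and let Γ := {⟨λ_0, χ⟩ : χ ∈ M} ⊆ ℚ, a cyclic subgroup. If θ ∈ M_ℝ satisfies ⟨λ_0, θ⟩ ∉ (1/2)Γ := {g/2 : g ∈ Γ}, then θ is λ_0-generic with respect to ℓ. In particular, since (1/2)Γ is a proper (discrete) subset of ℝ, λ_0-generic points θ with respect to ℓ exist. -/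
noncomputable section

/-!
Since the weights and roots lie in `M`, so does every `ζ_λ'`; hence if `⟨λ₀, χ − θ − ζ_λ'/2⟩ = 0`
with `χ ∈ M`, then `2⟨λ₀, θ⟩ = ⟨λ₀, 2χ − ζ_λ'⟩ ∈ Γ`. For rational `λ₀` the group `Γ` consists of
rationals, so any `θ` with `⟨λ₀, θ⟩ = √2` is generic; such `θ` exists because `λ₀ ≠ 0`.
-/

theorem pairR_eq_dotProduct {d : ℕ} (lam chi : Fin d → ℝ) : pairR lam chi = lam ⬝ᵥ chi := rfl

def latticeAddSubgroup (d : ℕ) : AddSubgroup (Fin d → ℝ) :=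
  ((Int.castAddHom ℝ).compLeft (Fin d)).range

theorem mem_latticeAddSubgroup {d : ℕ} {x : Fin d → ℝ} :
    x ∈ latticeAddSubgroup d ↔ x ∈ latticePts d := by
  simp [latticeAddSubgroup, latticePts, funext_iff]

theorem zetaW_mem_latticePts {d n m : ℕ} {β : Fin n → Fin d → ℝ} {α : Fin m → Fin d → ℝ}
    (hβ : ∀ i, β i ∈ latticePts d) (hα : ∀ j, α j ∈ latticePts d) (lam : Fin d → ℝ) :
    zetaW β α lam ∈ latticePts d := by
  simp only [← mem_latticeAddSubgroup] at hβ hα ⊢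
  exact add_mem (neg_mem (sum_mem fun i _ => hβ i)) (sum_mem fun j _ => hα j)

theorem genericW_of_forall_ne_half_pairR {d n m : ℕ} {β : Fin n → Fin d → ℝ}
    {α : Fin m → Fin d → ℝ} (hβ : ∀ i, β i ∈ latticePts d) (hα : ∀ j, α j ∈ latticePts d)
    {lam0 θ : Fin d → ℝ} (hθ : ∀ χ ∈ latticePts d, pairR lam0 θ ≠ pairR lam0 χ / 2)
    (ℓ : Fin d → ℝ) : genericW β α lam0 ℓ θ := by
  intro lam' _ χ hχ hzero
  have hmem : (2 : ℤ) • χ - zetaW β α lam' ∈ latticePts d := by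
    rw [← mem_latticeAddSubgroup] at hχ ⊢
    exact sub_mem (zsmul_mem hχ 2)
      (mem_latticeAddSubgroup.mpr (zetaW_mem_latticePts hβ hα lam'))
  refine hθ _ hmem ?_
  simp only [pairR_eq_dotProduct, dotProduct_sub, dotProduct_smul] at hzero ⊢
  simp only [zsmul_eq_mul, smul_eq_mul, Int.cast_ofNat] at hzero ⊢
  linarith

theorem exists_ratCast_eq_pairR {d : ℕ} {lam0 : Fin d → ℝ}
    (hrat : ∀ i, ∃ q : ℚ, lam0 i = (q : ℝ)) {χ : Fin d → ℝ} (hχ : χ ∈ latticePts d) :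
    ∃ q : ℚ, pairR lam0 χ = q := by
  choose q hq using hrat
  obtain ⟨c, rfl⟩ := hχ
  exact ⟨∑ i, q i * c i, by simp [pairR, hq]⟩

theorem exists_pairR_eq {d : ℕ} {lam0 : Fin d → ℝ} (hlam0 : lam0 ≠ 0) (t : ℝ) :
    ∃ θ : Fin d → ℝ, pairR lam0 θ = t := by
  have hself : lam0 ⬝ᵥ lam0 ≠ 0 := mt dotProduct_self_eq_zero.mp hlam0
  exact ⟨(t / (lam0 ⬝ᵥ lam0)) • lam0, by
    rw [pairR_eq_dotProduct, dotProduct_smul, smul_eq_mul, div_mul_cancel₀ t hself]⟩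

theorem generic_points_exist_general {d n m : ℕ}
    (β : Fin n → Fin d → ℝ) (α : Fin m → Fin d → ℝ)
    (hβ : ∀ i, β i ∈ latticePts d) (hα : ∀ j, α j ∈ latticePts d)
    (lam0 : Fin d → ℝ)
    (ℓ : Fin d → ℝ) (hℓ : pairR lam0 ℓ ≠ 0)
    (hrat : ∀ i, ∃ q : ℚ, lam0 i = (q : ℝ)) :
    (∀ θ : Fin d → ℝ,
        pairR lam0 θ ∉
          {x : ℝ | ∃ g ∈ {y : ℝ | ∃ χ ∈ latticePts d, pairR lam0 χ = y}, x = g / 2} →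
        genericW β α lam0 ℓ θ) ∧
      ∃ θ : Fin d → ℝ, genericW β α lam0 ℓ θ := by
  have criterion : ∀ θ : Fin d → ℝ, pairR lam0 θ ∉
      {x : ℝ | ∃ g ∈ {y : ℝ | ∃ χ ∈ latticePts d, pairR lam0 χ = y}, x = g / 2} →
      genericW β α lam0 ℓ θ := fun θ hθ =>
    genericW_of_forall_ne_half_pairR hβ hα (fun χ hχ h => hθ ⟨_, ⟨χ, hχ, rfl⟩, h⟩) ℓ
  have hlam0 : lam0 ≠ 0 := by
    rintro rfl
    exact hℓ (zero_dotProduct ℓ)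
  obtain ⟨θ, hθ⟩ := exists_pairR_eq hlam0 √2
  refine ⟨criterion, θ, criterion θ ?_⟩
  rintro ⟨_, ⟨χ, hχ, rfl⟩, hhalf⟩
  obtain ⟨q, hq⟩ := exists_ratCast_eq_pairR hrat hχ
  exact irrational_sqrt_two ⟨q / 2, by rw [← hθ, hhalf, hq]; push_cast; ring⟩

/-- if λ₀ is rational and ⟨λ₀, θ⟩ ∉ (1/2)Γ, where Γ = {⟨λ₀, χ⟩ : χ ∈ M},
then θ is λ₀-generic with respect to ℓ; in particular λ₀-generic points exist. -/
theorem generic_points_exist {d n m : ℕ} (hn : 1 ≤ n)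
    (β : Fin n → Fin d → ℝ) (α : Fin m → Fin d → ℝ)
    (hβ : ∀ i, β i ∈ latticePts d) (hα : ∀ j, α j ∈ latticePts d)
    (lam0 : Fin d → ℝ)
    (hlam0β : ∀ i, pairR lam0 (β i) < 0)
    (hlam0α : ∀ j, pairR lam0 (α j) = 0)
    (ℓ : Fin d → ℝ) (hℓ : pairR lam0 ℓ ≠ 0)
    (hrat : ∀ i, ∃ q : ℚ, lam0 i = (q : ℝ)) :
    (∀ θ : Fin d → ℝ,
        pairR lam0 θ ∉
          {x : ℝ | ∃ g ∈ {y : ℝ | ∃ χ ∈ latticePts d, pairR lam0 χ = y}, x = g / 2} →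
        genericW β α lam0 ℓ θ) ∧
      ∃ θ : Fin d → ℝ, genericW β α lam0 ℓ θ :=
  generic_points_exist_general β α hβ hα lam0 ℓ hℓ hrat
end
end

section
/- Combinatorial (Hilbert–Mumford) form of Lemma 2.10 on instability: Let M be a free abelian group of finite rank, N := Hom(M, ℤ), with pairings extended ℚ-linearly. Let β_1, …, β_n ∈ M, let λ_0 ∈ N satisfy ⟨λ_0, β_i⟩ < 0 for all i, and let ℓ ∈ M ⊗ ℚ satisfy ⟨λ_0, ℓ⟩ < 0. Then for every subset S ⊆ {1, …, n} the following are equivalent: (i) there exists λ ∈ N with ⟨λ, ℓ⟩ < 0 and ⟨λ, β_i⟩ ≥ 0 for all i ∈ S; (ii) there exists λ' ∈ N with ⟨λ', ℓ⟩ = 0 and ⟨λ', β_i⟩ > 0 for all i ∈ S. -/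
/-!
Both directions move along the plane spanned by the given cocharacter and `λ₀`.
From `λ` with `⟨λ, ℓ⟩ < 0`, the combination `p λ - q λ₀` with `p, q > 0` chosen so that
`⟨p λ - q λ₀, ℓ⟩ = 0` lies in the kernel of `ℓ`, and it is strictly positive on `S`
because `-λ₀` is strictly positive on every weight. Conversely, from `λ'` in the kernel of
`ℓ`, `N λ' + λ₀` pairs with `ℓ` as `λ₀` does, and is positive on `S` once `N` is large.
-/

/-- Integral pairing between a cocharacter `λ ∈ N = Fin d → ℤ` and a character
`χ ∈ M = Fin d → ℤ`. -/
def pairZ {d : ℕ} (lam chi : Fin d → ℤ) : ℤ := ∑ k, lam k * chi k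

/-- ℚ-linear extension of the pairing, for `ℓ ∈ M ⊗ ℚ`. -/
def pairQ {d : ℕ} (lam : Fin d → ℤ) (chi : Fin d → ℚ) : ℚ := ∑ k, (lam k : ℚ) * chi k

section Pairing

variable {d : ℕ}

lemma pairZ_add_left (x y chi : Fin d → ℤ) :
    pairZ (x + y) chi = pairZ x chi + pairZ y chi := by
  simp only [pairZ, Pi.add_apply, add_mul, Finset.sum_add_distrib]

lemma pairZ_sub_left (x y chi : Fin d → ℤ) :
    pairZ (x - y) chi = pairZ x chi - pairZ y chi := by
  simp only [pairZ, Pi.sub_apply, sub_mul, Finset.sum_sub_distrib]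

lemma pairZ_smul_left (a : ℤ) (x chi : Fin d → ℤ) :
    pairZ (a • x) chi = a * pairZ x chi := by
  simp only [pairZ, Pi.smul_apply, smul_eq_mul, mul_assoc, Finset.mul_sum]

lemma pairQ_add_left (x y : Fin d → ℤ) (chi : Fin d → ℚ) :
    pairQ (x + y) chi = pairQ x chi + pairQ y chi := by
  simp only [pairQ, Pi.add_apply, Int.cast_add, add_mul, Finset.sum_add_distrib]

lemma pairQ_sub_left (x y : Fin d → ℤ) (chi : Fin d → ℚ) :
    pairQ (x - y) chi = pairQ x chi - pairQ y chi := by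
  simp only [pairQ, Pi.sub_apply, Int.cast_sub, sub_mul, Finset.sum_sub_distrib]

lemma pairQ_smul_left (a : ℤ) (x : Fin d → ℤ) (chi : Fin d → ℚ) :
    pairQ (a • x) chi = a * pairQ x chi := by
  simp only [pairQ, Pi.smul_apply, smul_eq_mul, Int.cast_mul, mul_assoc, Finset.mul_sum]

end Pairing

lemma Rat.exists_pos_int_mul_eq_mul_of_neg {x y : ℚ} (hx : x < 0) (hy : y < 0) :
    ∃ p q : ℤ, 0 < p ∧ 0 < q ∧ p * x = q * y := by
  refine ⟨-y.num * x.den, -x.num * y.den, ?_, ?_, ?_⟩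
  · exact mul_pos (neg_pos.2 (Rat.num_neg.2 hy)) (by exact_mod_cast x.den_pos)
  · exact mul_pos (neg_pos.2 (Rat.num_neg.2 hx)) (by exact_mod_cast y.den_pos)
  · push_cast
    rw [mul_assoc, mul_assoc, Rat.den_mul_eq_num, Rat.den_mul_eq_num]
    ring

lemma exists_mul_add_pos_of_pos {ι : Type*} [Fintype ι] (a b : ι → ℤ) :
    ∃ N : ℤ, ∀ i, 0 < a i → 0 < N * a i + b i := by
  refine ⟨1 + ∑ j, |b j|, fun i hi => ?_⟩
  have hb : -b i ≤ ∑ j, |b j| := (neg_le_abs (b i)).trans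
    (Finset.single_le_sum (fun j _ => abs_nonneg (b j)) (Finset.mem_univ i))
  have hN : 1 + ∑ j, |b j| ≤ (1 + ∑ j, |b j|) * a i :=
    le_mul_of_one_le_right (by positivity) hi
  linarith

/-- combinatorial form of Lemma 2.10, Hilbert–Mumford instability:
given weights β_i, a central λ₀ with ⟨λ₀, β_i⟩ < 0 for all i, and ℓ ∈ M ⊗ ℚ with
⟨λ₀, ℓ⟩ < 0, a subset S is destabilized by some λ with ⟨λ, ℓ⟩ < 0 iff it is driven to
zero by some λ' in the kernel of ℓ. -/
theorem hilbert_mumford_instability_combinatorial {d n : ℕ}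
    (β : Fin n → Fin d → ℤ) (lam0 : Fin d → ℤ)
    (hlam0 : ∀ i, pairZ lam0 (β i) < 0)
    (ℓ : Fin d → ℚ) (hℓ : pairQ lam0 ℓ < 0)
    (S : Set (Fin n)) :
    (∃ lam : Fin d → ℤ, pairQ lam ℓ < 0 ∧ ∀ i ∈ S, 0 ≤ pairZ lam (β i)) ↔
      (∃ lam' : Fin d → ℤ, pairQ lam' ℓ = 0 ∧ ∀ i ∈ S, 0 < pairZ lam' (β i)) := by
  constructor
  · rintro ⟨lam, hlam, hS⟩
    obtain ⟨p, q, hp, hq, hpq⟩ := Rat.exists_pos_int_mul_eq_mul_of_neg hlam hℓ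
    refine ⟨p • lam - q • lam0, ?_, fun i hi => ?_⟩
    · rw [pairQ_sub_left, pairQ_smul_left, pairQ_smul_left, hpq, sub_self]
    · rw [pairZ_sub_left, pairZ_smul_left, pairZ_smul_left]
      have := mul_nonneg hp.le (hS i hi)
      have := mul_neg_of_pos_of_neg hq (hlam0 i)
      linarith
  · rintro ⟨lam', hlam', hS⟩
    obtain ⟨N, hN⟩ :=
      exists_mul_add_pos_of_pos (fun i => pairZ lam' (β i)) (fun i => pairZ lam0 (β i))
    refine ⟨N • lam' + lam0, ?_, fun i hi => ?_⟩
    · rwa [pairQ_add_left, pairQ_smul_left, hlam', mul_zero, zero_add]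
    · rw [pairZ_add_left, pairZ_smul_left]
      exact (hN i (hS i hi)).le
end
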